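/- arXiv:1807.04904 — 4 statements merged into one kernel-verified Lean document; each statement's English description precedes it below -/
import Mathlib

section
/- Let Θ ⊆ ℝ^r be compact and let F_Θ(Q) = {f(·;θ) : θ ∈ Θ} be the parameterized family of probability density functions on Q. Assume: (A) for almost every q ∈ Q the map θ ↦ f(q;θ) is continuous on Θ, and for every N the map θ ↦ J^N(f(·;θ);V) is continuous on Θ; (B) for any sequence of densities f_N ∈ F_Θ(Q) with f_N(q) → f(q) for almost every q ∈ Q for some f ∈ F_Θ(Q), one has v_i^N(t_j; f_N) → v_i(t_j; f) as N → ∞ for all i ∈ {1,...,m} and j ∈ {0,...,n_i}; (C) the numbers v_i(t_j; f) and v_i^N(t_j; f) are uniformly bounded over all N, all j ∈ {0,...,n_i}, i ∈ {1,...,m}, and all f ∈ F_Θ(Q). Then for every N there exists a minimizer f̂^N = f(·;θ̂^N) of J^N(·;V) over F_Θ(Q), and there exists a subsequence θ̂^{N_k} converging to some θ̂ ∈ Θ such that f̂ = f(·;θ̂) minimizes J(·;V) over F_Θ(Q). -/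
open Filter Topology MeasureTheory

/-!
The minimizers `θ̂^N` exist because `θ ↦ J^N(f(·;θ))` is continuous on the compact set `Θ`,
and compactness gives a convergent subsequence `θ̂^{N_k} → θ̂`. By (A) and (B), `J^N(f(·;θ_N))`
converges to `J(f(·;θ))` whenever `θ_N → θ` in `Θ` (continuous convergence). Applied to the
minimizers and to constant sequences, this lets us pass to the limit in
`J^{N_k}(f̂^{N_k}) ≤ J^{N_k}(f(·;θ))`.
-/

def ContinuousConvergesOn {X α : Type*} [TopologicalSpace X] [TopologicalSpace α]
    (G : ℕ → X → α) (g : X → α) (K : Set X) : Prop :=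
  ∀ xs : ℕ → X, (∀ N, xs N ∈ K) → ∀ x ∈ K, Tendsto xs atTop (𝓝 x) →
    Tendsto (fun N => G N (xs N)) atTop (𝓝 (g x))

lemma StrictMono.exists_tendsto_atTop_leftInverse {φ : ℕ → ℕ} (hφ : StrictMono φ) :
    ∃ k : ℕ → ℕ, Tendsto k atTop atTop ∧ ∀ j, k (φ j) = j := by
  refine ⟨fun N => Nat.findGreatest (fun j => φ j ≤ N) N, ?_, fun j => ?_⟩
  · refine Filter.tendsto_atTop.2 fun K => ?_
    filter_upwards [eventually_ge_atTop (φ K)] with N hN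
    exact Nat.le_findGreatest (hφ.le_apply.trans hN) hN
  · rw [Nat.findGreatest_eq_iff]
    exact ⟨hφ.le_apply, fun _ => le_rfl, fun n hn _ hφn => absurd hφn (not_le.2 (hφ hn))⟩

namespace ContinuousConvergesOn

variable {X α : Type*} [TopologicalSpace X] [TopologicalSpace α]
  {G : ℕ → X → α} {g : X → α} {K : Set X}

lemma tendsto_const (h : ContinuousConvergesOn G g K) {x : X} (hx : x ∈ K) :
    Tendsto (fun N => G N x) atTop (𝓝 (g x)) :=
  h (fun _ => x) (fun _ => hx) x hx tendsto_const_nhds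

lemma tendsto_comp_strictMono (h : ContinuousConvergesOn G g K) {φ : ℕ → ℕ}
    (hφ : StrictMono φ) {xs : ℕ → X} (hxs : ∀ ℓ, xs ℓ ∈ K) {x : X} (hx : x ∈ K)
    (hlim : Tendsto xs atTop (𝓝 x)) :
    Tendsto (fun ℓ => G (φ ℓ) (xs ℓ)) atTop (𝓝 (g x)) := by
  -- fill the gaps between the indices `φ ℓ` by repeating terms of `xs`
  obtain ⟨k, hk, hkφ⟩ := hφ.exists_tendsto_atTop_leftInverse
  have hfill := h (xs ∘ k) (fun N => hxs (k N)) x hx (hlim.comp hk)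
  simpa [Function.comp_def, hkφ] using hfill.comp hφ.tendsto_atTop

end ContinuousConvergesOn

theorem IsCompact.exists_isMinOn_subseq_tendsto_isMinOn {X α : Type*} [TopologicalSpace X]
    [FirstCountableTopology X] [LinearOrder α] [TopologicalSpace α] [OrderClosedTopology α]
    {K : Set X} (hK : IsCompact K) (hne : K.Nonempty) {G : ℕ → X → α} {g : X → α}
    (hG : ∀ N, ContinuousOn (G N) K) (hconv : ContinuousConvergesOn G g K) :
    ∃ xhat : ℕ → X, (∀ N, xhat N ∈ K ∧ IsMinOn (G N) K (xhat N)) ∧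
      ∃ φ : ℕ → ℕ, StrictMono φ ∧ ∃ x ∈ K,
        Tendsto (xhat ∘ φ) atTop (𝓝 x) ∧ IsMinOn g K x := by
  choose xhat hxhatK hxhatmin using fun N => hK.exists_isMinOn hne (hG N)
  obtain ⟨x, hxK, φ, hφ, hlim⟩ := hK.tendsto_subseq hxhatK
  refine ⟨xhat, fun N => ⟨hxhatK N, hxhatmin N⟩, φ, hφ, x, hxK, hlim, fun y hy => ?_⟩
  exact le_of_tendsto_of_tendsto'
    (hconv.tendsto_comp_strictMono hφ (fun ℓ => hxhatK (φ ℓ)) hxK hlim)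
    ((hconv.tendsto_const hy).comp hφ.tendsto_atTop) (fun ℓ => hxhatmin (φ ℓ) hy)

lemma tendsto_sum_sum_sub_sq {ι : Type*} [Fintype ι] {κ : ι → Type*} [∀ i, Fintype (κ i)]
    {β : Type*} {l : Filter β} (V : (i : ι) → κ i → ℝ) {u : β → (i : ι) → κ i → ℝ}
    {w : (i : ι) → κ i → ℝ} (hu : ∀ i j, Tendsto (fun b => u b i j) l (𝓝 (w i j))) :
    Tendsto (fun b => ∑ i, ∑ j, (V i j - u b i j) ^ 2) l (𝓝 (∑ i, ∑ j, (V i j - w i j) ^ 2)) :=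
  tendsto_finsetSum _ fun i _ => tendsto_finsetSum _ fun j _ =>
    (tendsto_const_nhds.sub (hu i j)).pow 2

theorem stmt_0_general {p r : ℕ}
    (Q : Set (EuclideanSpace ℝ (Fin p)))
    (Θ : Set (EuclideanSpace ℝ (Fin r))) (hΘc : IsCompact Θ) (hΘne : Θ.Nonempty)
    -- the parameterized family of probability densities on Q
    (f : EuclideanSpace ℝ (Fin r) → EuclideanSpace ℝ (Fin p) → ℝ)
    -- the data and the model mean outputs and their approximations
    (m : ℕ) (nn : Fin m → ℕ)
    (V : (i : Fin m) → Fin (nn i + 1) → ℝ)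
    (v : (i : Fin m) → Fin (nn i + 1) → (EuclideanSpace ℝ (Fin p) → ℝ) → ℝ)
    (vN : ℕ → (i : Fin m) → Fin (nn i + 1) → (EuclideanSpace ℝ (Fin p) → ℝ) → ℝ)
    -- the least squares objectives
    (J : (EuclideanSpace ℝ (Fin p) → ℝ) → ℝ)
    (JN : ℕ → (EuclideanSpace ℝ (Fin p) → ℝ) → ℝ)
    (hJ : ∀ g, J g = ∑ i : Fin m, ∑ j : Fin (nn i + 1), (V i j - v i j g) ^ 2)
    (hJN : ∀ N g, JN N g = ∑ i : Fin m, ∑ j : Fin (nn i + 1), (V i j - vN N i j g) ^ 2)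
    -- (A) continuity
    (hA1 : ∀ᵐ q ∂(volume.restrict Q), ContinuousOn (fun θ => f θ q) Θ)
    (hA2 : ∀ N, ContinuousOn (fun θ => JN N (f θ)) Θ)
    -- (B) convergence of the approximating mean outputs along a.e. convergent densities
    (hB : ∀ (θs : ℕ → EuclideanSpace ℝ (Fin r)), (∀ N, θs N ∈ Θ) →
      ∀ θ ∈ Θ,
        (∀ᵐ q ∂(volume.restrict Q), Tendsto (fun N => f (θs N) q) atTop (𝓝 (f θ q))) →
        ∀ (i : Fin m) (j : Fin (nn i + 1)),
          Tendsto (fun N => vN N i j (f (θs N))) atTop (𝓝 (v i j (f θ)))) :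
    ∃ θhat : ℕ → EuclideanSpace ℝ (Fin r),
      (∀ N, θhat N ∈ Θ ∧ ∀ θ ∈ Θ, JN N (f (θhat N)) ≤ JN N (f θ)) ∧
      ∃ φ : ℕ → ℕ, StrictMono φ ∧ ∃ θhatlim ∈ Θ,
        Tendsto (θhat ∘ φ) atTop (𝓝 θhatlim) ∧ ∀ θ ∈ Θ, J (f θhatlim) ≤ J (f θ) := by
  have hconv : ContinuousConvergesOn (fun N θ => JN N (f θ)) (fun θ => J (f θ)) Θ := by
    intro θs hθs θ hθ hlim
    have hae : ∀ᵐ q ∂(volume.restrict Q),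
        Tendsto (fun N => f (θs N) q) atTop (𝓝 (f θ q)) := by
      filter_upwards [hA1] with q hq
      exact (hq θ hθ).tendsto.comp (tendsto_nhdsWithin_iff.2 ⟨hlim, .of_forall hθs⟩)
    simpa only [hJ, hJN] using tendsto_sum_sum_sub_sq V (hB θs hθs θ hθ hae)
  obtain ⟨θhat, hθhat, φ, hφ, θhatlim, hθhatlim, hlim, hmin⟩ :=
    hΘc.exists_isMinOn_subseq_tendsto_isMinOn hΘne hA2 hconv
  exact ⟨θhat, hθhat, φ, hφ, θhatlim, hθhatlim, hlim, fun θ hθ => hmin hθ⟩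

/-- existence of minimizers of the approximating least squares problems
over the parameterized family of densities `F_Θ(Q) = {f(·;θ) : θ ∈ Θ}` and subsequential
convergence of the corresponding optimal parameters to a minimizer of the limiting
problem (Theorem 2.1). -/
theorem stmt_0 {p r : ℕ}
    (Q : Set (EuclideanSpace ℝ (Fin p))) (hQ : MeasurableSet Q)
    (Θ : Set (EuclideanSpace ℝ (Fin r))) (hΘc : IsCompact Θ) (hΘne : Θ.Nonempty)
    -- the parameterized family of probability densities on Q
    (f : EuclideanSpace ℝ (Fin r) → EuclideanSpace ℝ (Fin p) → ℝ)
    (hpdf : ∀ θ ∈ Θ, (∀ q ∈ Q, 0 ≤ f θ q) ∧ (∫ q in Q, f θ q) = 1)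
    -- the data and the model mean outputs and their approximations
    (m : ℕ) (hm : 0 < m) (nn : Fin m → ℕ)
    (V : (i : Fin m) → Fin (nn i + 1) → ℝ)
    (v : (i : Fin m) → Fin (nn i + 1) → (EuclideanSpace ℝ (Fin p) → ℝ) → ℝ)
    (vN : ℕ → (i : Fin m) → Fin (nn i + 1) → (EuclideanSpace ℝ (Fin p) → ℝ) → ℝ)
    -- the least squares objectives
    (J : (EuclideanSpace ℝ (Fin p) → ℝ) → ℝ)
    (JN : ℕ → (EuclideanSpace ℝ (Fin p) → ℝ) → ℝ)
    (hJ : ∀ g, J g = ∑ i : Fin m, ∑ j : Fin (nn i + 1), (V i j - v i j g) ^ 2)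
    (hJN : ∀ N g, JN N g = ∑ i : Fin m, ∑ j : Fin (nn i + 1), (V i j - vN N i j g) ^ 2)
    -- (A) continuity
    (hA1 : ∀ᵐ q ∂(volume.restrict Q), ContinuousOn (fun θ => f θ q) Θ)
    (hA2 : ∀ N, ContinuousOn (fun θ => JN N (f θ)) Θ)
    -- (B) convergence of the approximating mean outputs along a.e. convergent densities
    (hB : ∀ (θs : ℕ → EuclideanSpace ℝ (Fin r)), (∀ N, θs N ∈ Θ) →
      ∀ θ ∈ Θ,
        (∀ᵐ q ∂(volume.restrict Q), Tendsto (fun N => f (θs N) q) atTop (𝓝 (f θ q))) →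
        ∀ (i : Fin m) (j : Fin (nn i + 1)),
          Tendsto (fun N => vN N i j (f (θs N))) atTop (𝓝 (v i j (f θ))))
    -- (C) uniform boundedness
    (hC : ∃ M : ℝ, ∀ θ ∈ Θ, ∀ (i : Fin m) (j : Fin (nn i + 1)),
      |v i j (f θ)| ≤ M ∧ ∀ N, |vN N i j (f θ)| ≤ M) :
    ∃ θhat : ℕ → EuclideanSpace ℝ (Fin r),
      (∀ N, θhat N ∈ Θ ∧ ∀ θ ∈ Θ, JN N (f (θhat N)) ≤ JN N (f θ)) ∧
      ∃ φ : ℕ → ℕ, StrictMono φ ∧ ∃ θhatlim ∈ Θ,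
        Tendsto (θhat ∘ φ) atTop (𝓝 θhatlim) ∧ ∀ θ ∈ Θ, J (f θhatlim) ≤ J (f θ) :=
  stmt_0_general Q Θ hΘc hΘne f m nn V v vN J JN hJ hJN hA1 hA2 hB
end

section
/- Let H be a Hilbert space with norm |·|, and for each N ∈ ℕ let H^N be a Hilbert space with norm |·|_N and U^N a closed subspace of H^N. Let I^N : H → H^N be linear with range all of H^N and |I^N z|_N ≤ |z| for all z ∈ H, let p^N : H^N → U^N be the orthogonal projection of H^N onto U^N, and set P^N = p^N ∘ I^N. Let S : [0,∞) → L(H) and, for each N, S^N : [0,∞) → L(U^N) be strongly continuous one-parameter semigroups of bounded linear operators (S(0) = I, S(t+s) = S(t)S(s) for s,t ≥ 0, and t ↦ S(t)z continuous for each z; similarly for S^N) satisfying the uniform bounds ‖S(t)‖ ≤ M e^{λ₀ t} and ‖S^N(t)‖ ≤ M e^{λ₀ t} for all t ≥ 0 and all N, with M ≥ 1 and λ₀ ∈ ℝ independent of N. For λ > λ₀ define the resolvent operators by the Bochner integrals R_λ z = ∫₀^∞ e^{−λ t} S(t) z dt (z ∈ H) and R_λ^N w = ∫₀^∞ e^{−λ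 t} S^N(t) w dt (w ∈ U^N). Suppose that for some λ > λ₀, |P^N R_λ z − R_λ^N P^N z|_N → 0 as N → ∞ for every z ∈ H. Then for every z ∈ H and every T > 0, sup_{0 ≤ t ≤ T} |P^N S(t) z − S^N(t) P^N z|_N → 0 as N → ∞. -/
/-!
Let `Δ_N = P^N R_λ - R_λ^N P^N` be the resolvent defects. For `y = R_λ (R_λ x)` the quantity
`P^N S(t) y - S^N(t) P^N y` equals `Δ_N (S(t) R_λ x) - S^N(t) Δ_N (R_λ x)` plus
`∫₀ᵗ S^N(t - s) Δ_N (S(s) x) ds`, as one sees by integrating the derivative of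
`σ ↦ S^N(t - σ) R_λ^N P^N S(σ) R_λ x`. The `Δ_N` are uniformly bounded and tend to `0`
pointwise, hence uniformly on the compact orbits `{S(s) x | s ∈ [0, T]}` and
`{S(s) R_λ x | s ∈ [0, T]}`, which gives the convergence for such `y`. The range of `R_λ` is
dense, since it contains the averages `h⁻¹ ∫₀ʰ e^{-λt} S(t) z dt → z`, so the range of `R_λ²` is
dense too; as the operators `P^N S(t) - S^N(t) P^N` are uniformly bounded for `t ∈ [0, T]`, the
convergence extends to every `z`.
-/

open Filter Topology MeasureTheory Set Real

section Semigroup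

variable {E : Type*} [NormedAddCommGroup E] [NormedSpace ℝ E]

/-- A strongly continuous semigroup of type `(M, ω)`; the values at negative times play no role. -/
structure IsC0SemigroupOfType (S : ℝ → E →L[ℝ] E) (M ω : ℝ) : Prop where
  map_zero : S 0 = ContinuousLinearMap.id ℝ E
  map_add : ∀ s t : ℝ, 0 ≤ s → 0 ≤ t → S (t + s) = (S t).comp (S s)
  continuousOn_apply : ∀ z : E, ContinuousOn (fun t => S t z) (Ici 0)
  norm_le : ∀ t : ℝ, 0 ≤ t → ‖S t‖ ≤ M * exp (ω * t)

theorem integrableOn_laplace_majorant {ω lam : ℝ} (hlam : ω < lam) (M c : ℝ) :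
    IntegrableOn (fun t => M * exp ((ω - lam) * t) * c) (Ioi 0) :=
  ((integrableOn_exp_mul_Ioi (sub_neg.2 hlam) 0).const_mul M).mul_const c

namespace IsC0SemigroupOfType

variable {S : ℝ → E →L[ℝ] E} {M ω lam : ℝ}

theorem apply_zero (hS : IsC0SemigroupOfType S M ω) (z : E) : S 0 z = z := by
  rw [hS.map_zero, ContinuousLinearMap.id_apply]

theorem apply_apply (hS : IsC0SemigroupOfType S M ω) {s t : ℝ} (hs : 0 ≤ s) (ht : 0 ≤ t)
    (z : E) : S t (S s z) = S (t + s) z := by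
  rw [hS.map_add s t hs ht, ContinuousLinearMap.comp_apply]

theorem apply_comm (hS : IsC0SemigroupOfType S M ω) {s t : ℝ} (hs : 0 ≤ s) (ht : 0 ≤ t)
    (z : E) : S t (S s z) = S s (S t z) := by
  rw [hS.apply_apply hs ht, hS.apply_apply ht hs, add_comm]

theorem nonneg (hS : IsC0SemigroupOfType S M ω) : 0 ≤ M := by
  simpa using (norm_nonneg _).trans (hS.norm_le 0 le_rfl)

theorem norm_le_of_mem_Icc (hS : IsC0SemigroupOfType S M ω) {t t₁ : ℝ} (ht : t ∈ Icc 0 t₁) :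
    ‖S t‖ ≤ M * exp (|ω| * t₁) := by
  refine (hS.norm_le t ht.1).trans (mul_le_mul_of_nonneg_left (exp_le_exp.2 ?_) hS.nonneg)
  exact (mul_le_mul_of_nonneg_right (le_abs_self ω) ht.1).trans
    (mul_le_mul_of_nonneg_left ht.2 (abs_nonneg ω))

theorem tendsto_apply_apply (hS : IsC0SemigroupOfType S M ω) {ι : Type*} {l : Filter ι}
    {τ : ι → ℝ} {t : ℝ} (ht : 0 ≤ t) (hτ : Tendsto τ l (𝓝[Ici 0] t)) {v : ι → E} {z : E}
    (hv : Tendsto v l (𝓝 z)) : Tendsto (fun i => S (τ i) (v i)) l (𝓝 (S t z)) := by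
  have hfixed : Tendsto (fun i => S (τ i) z) l (𝓝 (S t z)) :=
    (hS.continuousOn_apply z t ht).tendsto.comp hτ
  have hdiff : Tendsto (fun i => S (τ i) (v i - z)) l (𝓝 0) := by
    have hbound : ∀ᶠ i in l, ‖S (τ i) (v i - z)‖ ≤ M * exp (|ω| * (t + 1)) * ‖v i - z‖ := by
      filter_upwards [(tendsto_nhdsWithin_iff.1 hτ).2,
        (tendsto_nhdsWithin_iff.1 hτ).1.eventually (eventually_le_nhds (lt_add_one t))]
        with i h0 h1
      exact (S (τ i)).le_of_opNorm_le (hS.norm_le_of_mem_Icc ⟨h0, h1⟩) _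
    refine squeeze_zero_norm' hbound ?_
    simpa using (tendsto_iff_norm_sub_tendsto_zero.1 hv).const_mul (M * exp (|ω| * (t + 1)))
  simpa using hdiff.add hfixed

theorem continuousOn_apply_sub (hS : IsC0SemigroupOfType S M ω) {t : ℝ} {v : ℝ → E}
    (hv : ContinuousOn v (Icc 0 t)) : ContinuousOn (fun s => S (t - s) (v s)) (Icc 0 t) := by
  intro s hs
  refine hS.tendsto_apply_apply (sub_nonneg.2 hs.2) ?_ (hv s hs)
  refine tendsto_nhdsWithin_iff.2 ⟨?_, ?_⟩
  · exact ((continuous_sub_left t).tendsto s).mono_left nhdsWithin_le_nhds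
  · filter_upwards [self_mem_nhdsWithin] with σ hσ using sub_nonneg.2 hσ.2

theorem hasDerivWithinAt_apply (hS : IsC0SemigroupOfType S M ω) {w d : E}
    (hd : HasDerivWithinAt (fun h => S h w) d (Ioi 0) 0) {s : ℝ} (hs : 0 ≤ s) :
    HasDerivWithinAt (fun σ => S σ w) (S s d) (Ioi s) s := by
  have hshift : HasDerivWithinAt (fun σ => S (σ - s) w) d (Ioi s) s := by
    have h := hd.scomp_of_eq s ((hasDerivWithinAt_id s (Ioi s)).sub_const s)
      (fun σ (hσ : s < σ) => show 0 < σ - s from sub_pos.2 hσ) (sub_self s).symm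
    rwa [one_smul] at h
  refine ((S s).hasFDerivAt.comp_hasDerivWithinAt s hshift).congr (fun σ hσ => ?_) ?_
  · simp [hS.apply_apply (sub_nonneg.2 (le_of_lt hσ)) hs]
  · simp [hS.apply_zero]

/-- Product rule for `σ ↦ S (t - σ) (u σ)`, where `u s` lies in the domain of the generator
and `d` is the generator applied to `u s`. -/
theorem hasDerivWithinAt_apply_sub_apply (hS : IsC0SemigroupOfType S M ω) {s t : ℝ}
    (hst : s < t) {u : ℝ → E} {u' d : E} (hu : HasDerivWithinAt u u' (Ioi s) s)
    (hd : HasDerivWithinAt (fun h => S h (u s)) d (Ioi 0) 0) :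
    HasDerivWithinAt (fun σ => S (t - σ) (u σ)) (S (t - s) (u' - d)) (Ioi s) s := by
  rw [hasDerivWithinAt_iff_tendsto_slope' self_notMem_Ioi] at hu hd ⊢
  have hd' : Tendsto (fun σ => slope (fun h => S h (u s)) 0 (σ - s)) (𝓝[>] s) (𝓝 d) :=
    hd.comp (sub_self s ▸ (map_subRight_nhdsGT (c := s) (a := s)).le)
  have hτ : Tendsto (fun σ => t - σ) (𝓝[>] s) (𝓝[Ici 0] (t - s)) := by
    refine tendsto_nhdsWithin_iff.2
      ⟨((continuous_sub_left t).tendsto s).mono_left nhdsWithin_le_nhds, ?_⟩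
    filter_upwards [Ioo_mem_nhdsGT hst] with σ hσ using sub_nonneg.2 hσ.2.le
  refine (hS.tendsto_apply_apply (sub_nonneg.2 hst.le) hτ (hu.sub hd')).congr' ?_
  filter_upwards [Ioo_mem_nhdsGT hst] with σ ⟨hsσ, hσt⟩
  have hsplit : S (t - s) (u s) = S (t - σ) (S (σ - s) (u s)) := by
    rw [hS.apply_apply (sub_nonneg.2 hsσ.le) (sub_nonneg.2 hσt.le), sub_add_sub_cancel]
  simp only [slope_def_module, sub_zero, hS.apply_zero, hsplit]
  rw [← smul_sub, map_smul, map_sub, map_sub, map_sub]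
  congr 1
  abel

theorem continuousOn_laplace_integrand (hS : IsC0SemigroupOfType S M ω) (lam : ℝ) (z : E) :
    ContinuousOn (fun t => exp (-(lam * t)) • S t z) (Ici 0) :=
  (continuous_exp.comp (continuous_const_mul lam).neg).continuousOn.smul
    (hS.continuousOn_apply z)

theorem norm_laplace_integrand_le (hS : IsC0SemigroupOfType S M ω) (z : E) {t : ℝ}
    (ht : 0 ≤ t) : ‖exp (-(lam * t)) • S t z‖ ≤ M * exp ((ω - lam) * t) * ‖z‖ := by
  rw [norm_smul, norm_of_nonneg (exp_pos _).le]
  calc exp (-(lam * t)) * ‖S t z‖ ≤ exp (-(lam * t)) * (M * exp (ω * t) * ‖z‖) :=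
        mul_le_mul_of_nonneg_left ((S t).le_of_opNorm_le (hS.norm_le t ht) z) (exp_pos _).le
    _ = M * exp ((ω - lam) * t) * ‖z‖ := by
        rw [sub_mul, sub_eq_add_neg, exp_add, ← neg_mul]
        ring

theorem integrableOn_laplace_integrand (hS : IsC0SemigroupOfType S M ω) (hlam : ω < lam)
    (z : E) : IntegrableOn (fun t => exp (-(lam * t)) • S t z) (Ioi 0) := by
  refine (integrableOn_laplace_majorant hlam M ‖z‖).mono'
    ((hS.continuousOn_laplace_integrand lam z).mono Ioi_subset_Ici_self
      |>.aestronglyMeasurable measurableSet_Ioi) ?_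
  filter_upwards [ae_restrict_mem measurableSet_Ioi] with t ht
  exact hS.norm_laplace_integrand_le z (le_of_lt ht)

theorem norm_integral_laplace_integrand_le (hS : IsC0SemigroupOfType S M ω) (hlam : ω < lam)
    (z : E) : ‖∫ t in Ioi 0, exp (-(lam * t)) • S t z‖ ≤ M / (lam - ω) * ‖z‖ := by
  refine (norm_integral_le_of_norm_le (integrableOn_laplace_majorant hlam M ‖z‖) ?_).trans_eq ?_
  · filter_upwards [ae_restrict_mem measurableSet_Ioi] with t ht
    exact hS.norm_laplace_integrand_le z (le_of_lt ht)
  · rw [integral_mul_const, integral_const_mul, integral_exp_mul_Ioi (sub_neg.2 hlam), mul_zero,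
      exp_zero, ← neg_sub lam ω, div_neg]
    ring

noncomputable def resolvent (hS : IsC0SemigroupOfType S M ω) (hlam : ω < lam) : E →L[ℝ] E :=
  LinearMap.mkContinuous
    { toFun := fun z => ∫ t in Ioi 0, exp (-(lam * t)) • S t z
      map_add' := fun z w => by
        show ∫ t in Ioi 0, exp (-(lam * t)) • S t (z + w) = _
        simp only [ContinuousLinearMap.map_add, smul_add]
        exact integral_add (hS.integrableOn_laplace_integrand hlam z)
          (hS.integrableOn_laplace_integrand hlam w)
      map_smul' := fun c z => by
        show ∫ t in Ioi 0, exp (-(lam * t)) • S t (c • z) = _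
        simp only [map_smul, RingHom.id_apply, ← integral_smul, smul_comm c] }
    (M / (lam - ω)) (hS.norm_integral_laplace_integrand_le hlam)

theorem resolvent_apply (hS : IsC0SemigroupOfType S M ω) (hlam : ω < lam) (z : E) :
    hS.resolvent hlam z = ∫ t in Ioi 0, exp (-(lam * t)) • S t z := rfl

theorem norm_resolvent_le (hS : IsC0SemigroupOfType S M ω) (hlam : ω < lam) :
    ‖hS.resolvent hlam‖ ≤ M / (lam - ω) :=
  LinearMap.mkContinuous_norm_le _ (div_nonneg hS.nonneg (sub_pos.2 hlam).le) _

theorem resolvent_apply_apply (hS : IsC0SemigroupOfType S M ω) (hlam : ω < lam) {s : ℝ}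
    (hs : 0 ≤ s) (z : E) :
    hS.resolvent hlam (S s z) =
      exp (lam * s) • (hS.resolvent hlam z - ∫ t in 0..s, exp (-(lam * t)) • S t z) := by
  set f : ℝ → E := fun t => exp (-(lam * t)) • S t z
  have hshift : hS.resolvent hlam (S s z) = ∫ t in Ioi 0, exp (lam * s) • f (t + s) := by
    refine setIntegral_congr_fun measurableSet_Ioi fun t ht => ?_
    simp only [f, hS.apply_apply hs (le_of_lt ht), smul_smul, ← exp_add]
    ring_nf
  have hsubst : ∫ t in Ioi 0, f (t + s) = ∫ t in Ioi s, f t := by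
    have h := (measurePreserving_add_right volume s).setIntegral_preimage_emb
      (measurableEmbedding_addRight s) f (Ioi s)
    rwa [show (· + s) ⁻¹' Ioi s = Ioi (0 : ℝ) by ext; simp] at h
  rw [hshift, integral_smul, hsubst, resolvent_apply,
    ← intervalIntegral.integral_Ioi_sub_Ioi (hS.integrableOn_laplace_integrand hlam z) hs,
    sub_sub_cancel]

variable [CompleteSpace E]

theorem apply_resolvent (hS : IsC0SemigroupOfType S M ω) (hlam : ω < lam) {s : ℝ} (hs : 0 ≤ s)
    (z : E) : S s (hS.resolvent hlam z) = hS.resolvent hlam (S s z) := by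
  rw [resolvent_apply, resolvent_apply,
    ← ContinuousLinearMap.integral_comp_comm _ (hS.integrableOn_laplace_integrand hlam z)]
  refine setIntegral_congr_fun measurableSet_Ioi fun t ht => ?_
  rw [ContinuousLinearMap.map_smul, hS.apply_comm hs (le_of_lt ht)]

theorem hasDerivWithinAt_integral_laplace_integrand (hS : IsC0SemigroupOfType S M ω) (z : E) :
    HasDerivWithinAt (fun h => ∫ t in 0..h, exp (-(lam * t)) • S t z) z (Ioi 0) 0 := by
  have hf := hS.continuousOn_laplace_integrand lam z
  have h := intervalIntegral.integral_hasDerivWithinAt_right (a := 0) (b := 0) (s := Ici 0)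
    (t := Ioi 0) IntervalIntegrable.refl
    (hf.mono Ioi_subset_Ici_self |>.stronglyMeasurableAtFilter_nhdsWithin measurableSet_Ioi 0)
    (hf 0 self_mem_Ici |>.mono Ioi_subset_Ici_self)
  simpa [hS.apply_zero] using h.mono Ioi_subset_Ici_self

theorem hasDerivWithinAt_apply_resolvent (hS : IsC0SemigroupOfType S M ω) (hlam : ω < lam)
    (v : E) :
    HasDerivWithinAt (fun h => S h (hS.resolvent hlam v))
      (lam • hS.resolvent hlam v - v) (Ioi 0) 0 := by
  have hexp : HasDerivWithinAt (fun h => exp (lam * h)) lam (Ioi 0) 0 := by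
    simpa using ((hasDerivAt_id (0 : ℝ)).const_mul lam).exp.hasDerivWithinAt
  have h := hexp.smul ((hS.hasDerivWithinAt_integral_laplace_integrand (lam := lam) v).const_sub
    (hS.resolvent hlam v))
  simp only [mul_zero, exp_zero, intervalIntegral.integral_same, sub_zero, one_smul] at h
  refine (h.congr (fun σ (hσ : 0 < σ) => ?_) ?_).congr_deriv (by abel)
  · rw [Pi.smul_apply', hS.apply_resolvent hlam hσ.le, hS.resolvent_apply_apply hlam hσ.le]
  · rw [Pi.smul_apply', hS.apply_zero, mul_zero, exp_zero, intervalIntegral.integral_same,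
      sub_zero, one_smul]

theorem denseRange_resolvent (hS : IsC0SemigroupOfType S M ω) (hlam : ω < lam) :
    DenseRange (hS.resolvent hlam) := by
  intro w
  have hF := hS.hasDerivWithinAt_integral_laplace_integrand (lam := lam) w
  rw [hasDerivWithinAt_iff_tendsto_slope' self_notMem_Ioi] at hF
  refine mem_closure_of_tendsto hF (eventually_mem_nhdsWithin.mono fun h (hh : 0 < h) => ?_)
  refine ⟨h⁻¹ • (w - exp (-(lam * h)) • S h w), ?_⟩
  rw [map_smul, map_sub, map_smul, hS.resolvent_apply_apply hlam hh.le, slope_def_module,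
    intervalIntegral.integral_same, sub_zero, smul_smul, ← exp_add, neg_add_cancel, exp_zero,
    one_smul, sub_sub_cancel, sub_zero]

end IsC0SemigroupOfType

end Semigroup

section OperatorFamilies

variable {E : Type*} [NormedAddCommGroup E] [NormedSpace ℝ E]
  {α : Type*} {F : α → Type*} [∀ a, NormedAddCommGroup (F a)] [∀ a, NormedSpace ℝ (F a)]
  {l : Filter α}

theorem norm_comp_sub_comp_le {G : Type*} [NormedAddCommGroup G] [NormedSpace ℝ G]
    (P : E →L[ℝ] G) (A : E →L[ℝ] E) (A' : G →L[ℝ] G) {B C : ℝ} (hP : ‖P‖ ≤ B) (hA : ‖A‖ ≤ C)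
    (hA' : ‖A'‖ ≤ C) : ‖P.comp A - A'.comp P‖ ≤ B * C + C * B :=
  (norm_sub_le _ _).trans <| add_le_add
    ((P.opNorm_comp_le A).trans (mul_le_mul hP hA (norm_nonneg _) ((norm_nonneg _).trans hP)))
    ((A'.opNorm_comp_le P).trans (mul_le_mul hA' hP (norm_nonneg _) ((norm_nonneg _).trans hA')))

/-- The family is equi-Lipschitz, so by Ascoli pointwise convergence is uniform on compacts. -/
theorem tendstoUniformlyOn_norm_apply_of_norm_le (L : ∀ a, E →L[ℝ] F a) {C : ℝ}
    (hC : ∀ a, ‖L a‖ ≤ C) (hL : ∀ u, Tendsto (fun a => ‖L a u‖) l (𝓝 0)) {K : Set E}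
    (hK : IsCompact K) : TendstoUniformlyOn (fun a u => ‖L a u‖) 0 l K := by
  have hlip : ∀ a, LipschitzWith C.toNNReal (fun u => ‖L a u‖) := fun a =>
    (lipschitzWith_one_norm.comp ((L a).lipschitz.weaken
      (norm_toNNReal (a := L a) ▸ Real.toNNReal_le_toNNReal (hC a)))).weaken (by simp)
  have h := (EquicontinuousOn.tendsto_uniformOnFun_iff_pi (𝔖 := {K | IsCompact K})
    (fun _ h => h) (sUnion_eq_univ_iff.2 fun u => ⟨{u}, isCompact_singleton, rfl⟩)
    (fun K _ => (LipschitzWith.uniformEquicontinuous _ _ hlip).equicontinuous.equicontinuousOn K)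
    l 0).2 (tendsto_pi_nhds.2 hL)
  exact UniformOnFun.tendsto_iff_tendstoUniformlyOn.1 h K hK

theorem tendstoUniformlyOn_norm_apply_of_dense {ι : Type*} (L : ∀ a, ι → E →L[ℝ] F a)
    {s : Set ι} {C : ℝ} (hC : ∀ a, ∀ i ∈ s, ‖L a i‖ ≤ C) {D : Set E} (hD : Dense D)
    (hL : ∀ y ∈ D, TendstoUniformlyOn (fun a i => ‖L a i y‖) 0 l s) (z : E) :
    TendstoUniformlyOn (fun a i => ‖L a i z‖) 0 l s := by
  simp only [Metric.tendstoUniformlyOn_iff, Pi.zero_apply, dist_zero_left, norm_norm] at hL ⊢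
  intro ε hε
  obtain ⟨y, hyD, hy⟩ : ∃ y ∈ D, C * ‖z - y‖ < ε / 2 :=
    hD.exists_mem_open (isOpen_lt (continuous_const.mul (continuous_const.sub continuous_id).norm)
      continuous_const) ⟨z, show C * ‖z - z‖ < ε / 2 by simpa using half_pos hε⟩
  filter_upwards [hL y hyD (ε / 2) (half_pos hε)] with a ha i hi
  calc ‖L a i z‖ ≤ ‖L a i y‖ + ‖L a i (z - y)‖ := by
        rw [map_sub]
        exact norm_le_insert' _ _
    _ < ε / 2 + ε / 2 :=
        add_lt_add_of_lt_of_le (ha i hi) (((L a i).le_of_opNorm_le (hC a i hi) _).trans hy.le)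
    _ = ε := add_halves ε

end OperatorFamilies

section TwoSemigroups

variable {E F : Type*} [NormedAddCommGroup E] [NormedSpace ℝ E] [NormedAddCommGroup F]
  [NormedSpace ℝ F] {S : ℝ → E →L[ℝ] E} {T : ℝ → F →L[ℝ] F} {M ω M' ω' lam : ℝ}

namespace IsC0SemigroupOfType

noncomputable def resolventDefect (hS : IsC0SemigroupOfType S M ω)
    (hT : IsC0SemigroupOfType T M' ω') (hlam : ω < lam) (hlam' : ω' < lam) (P : E →L[ℝ] F) :
    E →L[ℝ] F :=
  P.comp (hS.resolvent hlam) - (hT.resolvent hlam').comp P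

theorem resolventDefect_apply (hS : IsC0SemigroupOfType S M ω)
    (hT : IsC0SemigroupOfType T M' ω') (hlam : ω < lam) (hlam' : ω' < lam) (P : E →L[ℝ] F)
    (z : E) :
    hS.resolventDefect hT hlam hlam' P z = P (hS.resolvent hlam z) - hT.resolvent hlam' (P z) :=
  rfl

variable [CompleteSpace E] [CompleteSpace F]

theorem resolvent_apply_sub_apply_resolvent_eq_integral (hS : IsC0SemigroupOfType S M ω)
    (hT : IsC0SemigroupOfType T M' ω') (hlam : ω < lam) (hlam' : ω' < lam) (P : E →L[ℝ] F)
    {t : ℝ} (ht : 0 ≤ t) (x : E) :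
    hT.resolvent hlam' (P (S t (hS.resolvent hlam x)))
        - T t (hT.resolvent hlam' (P (hS.resolvent hlam x)))
      = ∫ s in 0..t, T (t - s) (hS.resolventDefect hT hlam hlam' P (S s x)) := by
  have horbit : ∀ y, ContinuousOn (fun s => S s y) (Icc 0 t) := fun y =>
    (hS.continuousOn_apply y).mono Icc_subset_Ici_self
  have hcont : ContinuousOn
      (fun s => T (t - s) (hT.resolvent hlam' (P (S s (hS.resolvent hlam x))))) (Icc 0 t) :=
    hT.continuousOn_apply_sub
      (((hT.resolvent hlam').comp P).continuous.comp_continuousOn (horbit _))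
  have hcont' : ContinuousOn
      (fun s => T (t - s) (hS.resolventDefect hT hlam hlam' P (S s x))) (Icc 0 t) :=
    hT.continuousOn_apply_sub ((ContinuousLinearMap.continuous _).comp_continuousOn (horbit x))
  have hderiv : ∀ s ∈ Ioo 0 t,
      HasDerivWithinAt (fun s => T (t - s) (hT.resolvent hlam' (P (S s (hS.resolvent hlam x)))))
        (T (t - s) (hS.resolventDefect hT hlam hlam' P (S s x))) (Ioi s) s := by
    intro s ⟨hs, hst⟩
    have hu := ((hT.resolvent hlam').comp P).hasFDerivAt.comp_hasDerivWithinAt s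
      (hS.hasDerivWithinAt_apply (hS.hasDerivWithinAt_apply_resolvent hlam x) hs.le)
    refine (hT.hasDerivWithinAt_apply_sub_apply hst hu
      (hT.hasDerivWithinAt_apply_resolvent hlam' (P (S s (hS.resolvent hlam x))))).congr_deriv ?_
    simp only [resolventDefect_apply, ContinuousLinearMap.comp_apply, map_sub, map_smul,
      hS.apply_resolvent hlam hs.le]
    abel
  rw [intervalIntegral.integral_eq_sub_of_hasDeriv_right_of_le ht hcont hderiv
    (hcont'.mono (uIcc_of_le ht).subset).intervalIntegrable, sub_self, sub_zero, hS.apply_zero,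
    hT.apply_zero]

theorem norm_apply_resolvent_resolvent_sub_le (hS : IsC0SemigroupOfType S M ω)
    (hT : IsC0SemigroupOfType T M' ω') (hlam : ω < lam) (hlam' : ω' < lam) (P : E →L[ℝ] F)
    {t₁ δ : ℝ} {x : E} (hx : ∀ s ∈ Icc 0 t₁, ‖hS.resolventDefect hT hlam hlam' P (S s x)‖ ≤ δ)
    (hRx : ∀ s ∈ Icc 0 t₁,
      ‖hS.resolventDefect hT hlam hlam' P (S s (hS.resolvent hlam x))‖ ≤ δ)
    {t : ℝ} (ht : t ∈ Icc 0 t₁) :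
    ‖P (S t (hS.resolvent hlam (hS.resolvent hlam x)))
        - T t (P (hS.resolvent hlam (hS.resolvent hlam x)))‖
      ≤ (1 + M' * exp (|ω'| * t₁) * (1 + t₁)) * δ := by
  set Δ := hS.resolventDefect hT hlam hlam' P
  set C := M' * exp (|ω'| * t₁)
  have hC : ∀ s ∈ Icc 0 t₁, ∀ y, ‖T s y‖ ≤ C * ‖y‖ := fun s hs y =>
    (T s).le_of_opNorm_le (hT.norm_le_of_mem_Icc hs) y
  have hC0 : 0 ≤ C := mul_nonneg hT.nonneg (exp_pos _).le
  have hδ : 0 ≤ δ := (norm_nonneg _).trans (hx 0 ⟨le_rfl, ht.1.trans ht.2⟩)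
  have hsplit : P (S t (hS.resolvent hlam (hS.resolvent hlam x)))
        - T t (P (hS.resolvent hlam (hS.resolvent hlam x)))
      = Δ (S t (hS.resolvent hlam x)) - T t (Δ (S 0 (hS.resolvent hlam x)))
        + (hT.resolvent hlam' (P (S t (hS.resolvent hlam x)))
          - T t (hT.resolvent hlam' (P (hS.resolvent hlam x)))) := by
    rw [hS.apply_zero, resolventDefect_apply, resolventDefect_apply,
      hS.apply_resolvent hlam ht.1, map_sub]
    abel
  have hint : ‖∫ s in 0..t, T (t - s) (Δ (S s x))‖ ≤ C * δ * t₁ := by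
    refine (intervalIntegral.norm_integral_le_of_norm_le_const (C := C * δ)
      fun s hs => ?_).trans ?_
    · rw [uIoc_of_le ht.1] at hs
      exact (hC _ ⟨by linarith [hs.2], by linarith [hs.1, ht.2]⟩ _).trans
        (mul_le_mul_of_nonneg_left (hx s ⟨hs.1.le, hs.2.trans ht.2⟩) hC0)
    · rw [sub_zero, abs_of_nonneg ht.1]
      exact mul_le_mul_of_nonneg_left ht.2 (mul_nonneg hC0 hδ)
  rw [hsplit, hS.resolvent_apply_sub_apply_resolvent_eq_integral hT hlam hlam' P ht.1]
  calc _ ≤ δ + C * δ + C * δ * t₁ :=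
        norm_add_le_of_le (norm_sub_le_of_le (hRx t ht) ((hC t ht _).trans
          (mul_le_mul_of_nonneg_left (hRx 0 ⟨le_rfl, ht.1.trans ht.2⟩) hC0))) hint
    _ = (1 + C * (1 + t₁)) * δ := by ring

end IsC0SemigroupOfType

end TwoSemigroups

section Approximation

variable {E : Type*} [NormedAddCommGroup E] [NormedSpace ℝ E] [CompleteSpace E]
  {F : ℕ → Type*} [∀ n, NormedAddCommGroup (F n)] [∀ n, NormedSpace ℝ (F n)]
  [∀ n, CompleteSpace (F n)]
  {S : ℝ → E →L[ℝ] E} {T : ∀ n, ℝ → F n →L[ℝ] F n} {M ω lam : ℝ}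

namespace IsC0SemigroupOfType

theorem tendstoUniformlyOn_norm_apply_resolvent_resolvent_sub (hS : IsC0SemigroupOfType S M ω)
    (hT : ∀ n, IsC0SemigroupOfType (T n) M ω) (hlam : ω < lam) (P : ∀ n, E →L[ℝ] F n) {B : ℝ}
    (hP : ∀ n, ‖P n‖ ≤ B)
    (hres : ∀ z, Tendsto (fun n => ‖hS.resolventDefect (hT n) hlam hlam (P n) z‖) atTop (𝓝 0))
    (x : E) (t₁ : ℝ) :
    TendstoUniformlyOn (fun n t => ‖P n (S t (hS.resolvent hlam (hS.resolvent hlam x)))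
      - T n t (P n (hS.resolvent hlam (hS.resolvent hlam x)))‖) 0 atTop (Icc 0 t₁) := by
  rcases lt_or_ge t₁ 0 with ht₁ | ht₁
  · exact Icc_eq_empty_of_lt ht₁ ▸ tendstoUniformlyOn_empty
  have horbit : ∀ y, TendstoUniformlyOn
      (fun n s => ‖hS.resolventDefect (hT n) hlam hlam (P n) (S s y)‖) 0 atTop (Icc 0 t₁) :=
    fun y => ((tendstoUniformlyOn_norm_apply_of_norm_le _
      (fun n => norm_comp_sub_comp_le _ _ _ (hP n) (hS.norm_resolvent_le hlam)
        ((hT n).norm_resolvent_le hlam)) hres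
      (isCompact_Icc.image_of_continuousOn
        ((hS.continuousOn_apply y).mono Icc_subset_Ici_self))).comp (fun s => S s y)).mono
      fun s hs => mem_image_of_mem _ hs
  simp only [Metric.tendstoUniformlyOn_iff, Pi.zero_apply, dist_zero_left, norm_norm]
    at horbit ⊢
  intro ε hε
  set K := 1 + M * exp (|ω| * t₁) * (1 + t₁)
  have hK : 0 < K := by
    have := hS.nonneg
    positivity
  filter_upwards [horbit x (ε / (2 * K)) (by positivity),
    horbit (hS.resolvent hlam x) (ε / (2 * K)) (by positivity)] with n hx hRx t ht
  calc _ ≤ K * (ε / (2 * K)) := hS.norm_apply_resolvent_resolvent_sub_le (hT n) hlam hlam (P n)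
        (fun s hs => (hx s hs).le) (fun s hs => (hRx s hs).le) ht
    _ < ε := by field_simp; linarith

theorem tendstoUniformlyOn_of_tendsto_resolventDefect (hS : IsC0SemigroupOfType S M ω)
    (hT : ∀ n, IsC0SemigroupOfType (T n) M ω) (hlam : ω < lam) (P : ∀ n, E →L[ℝ] F n) {B : ℝ}
    (hP : ∀ n, ‖P n‖ ≤ B)
    (hres : ∀ z, Tendsto (fun n => ‖hS.resolventDefect (hT n) hlam hlam (P n) z‖) atTop (𝓝 0))
    (z : E) (t₁ : ℝ) :
    TendstoUniformlyOn (fun n t => ‖P n (S t z) - T n t (P n z)‖) 0 atTop (Icc 0 t₁) := by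
  refine tendstoUniformlyOn_norm_apply_of_dense (fun n t => (P n).comp (S t) - (T n t).comp (P n))
    (fun n t ht => norm_comp_sub_comp_le _ _ _ (hP n) (hS.norm_le_of_mem_Icc ht)
      ((hT n).norm_le_of_mem_Icc ht))
    ((hS.denseRange_resolvent hlam).comp (hS.denseRange_resolvent hlam)
      (hS.resolvent hlam).continuous) ?_ z
  rintro _ ⟨x, rfl⟩
  exact hS.tendstoUniformlyOn_norm_apply_resolvent_resolvent_sub hT hlam P hP hres x t₁

end IsC0SemigroupOfType

end Approximation

theorem stmt_6_general {H : Type*} [NormedAddCommGroup H] [InnerProductSpace ℝ H] [CompleteSpace H]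
    {HN : ℕ → Type*} [∀ N, NormedAddCommGroup (HN N)] [∀ N, InnerProductSpace ℝ (HN N)]
    (UN : ∀ N, Submodule ℝ (HN N))
    [∀ N, Submodule.HasOrthogonalProjection (UN N)] [∀ N, CompleteSpace ↥(UN N)]
    (IN : ∀ N, H →L[ℝ] HN N)
    (hINnorm : ∀ N (z : H), ‖IN N z‖ ≤ ‖z‖)
    (S : ℝ → H →L[ℝ] H) (SN : ∀ N, ℝ → (↥(UN N) →L[ℝ] ↥(UN N)))
    (M lam0 : ℝ)
    -- semigroup properties of S
    (hS0 : S 0 = ContinuousLinearMap.id ℝ H)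
    (hSadd : ∀ s t : ℝ, 0 ≤ s → 0 ≤ t → S (t + s) = (S t).comp (S s))
    (hScont : ∀ z : H, ContinuousOn (fun t => S t z) (Set.Ici 0))
    (hSbound : ∀ t : ℝ, 0 ≤ t → ‖S t‖ ≤ M * Real.exp (lam0 * t))
    -- semigroup properties of the S^N, with bounds uniform in N
    (hSN0 : ∀ N, SN N 0 = ContinuousLinearMap.id ℝ ↥(UN N))
    (hSNadd : ∀ N, ∀ s t : ℝ, 0 ≤ s → 0 ≤ t → SN N (t + s) = (SN N t).comp (SN N s))
    (hSNcont : ∀ N, ∀ w : ↥(UN N), ContinuousOn (fun t => SN N t w) (Set.Ici 0))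
    (hSNbound : ∀ N, ∀ t : ℝ, 0 ≤ t → ‖SN N t‖ ≤ M * Real.exp (lam0 * t))
    (lam : ℝ) (hlam : lam0 < lam)
    -- resolvent convergence (5.6): P^N R_λ z − R_λ^N P^N z → 0 for every z, where
    -- P^N = p^N ∘ I^N and the resolvents are Laplace transforms of the semigroups
    (hres : ∀ z : H,
      Tendsto (fun N =>
          ‖(Submodule.orthogonalProjectionOnto (UN N))
              (IN N (∫ t in Set.Ioi (0:ℝ), Real.exp (-(lam * t)) • S t z))
            - ∫ t in Set.Ioi (0:ℝ), Real.exp (-(lam * t)) •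
                SN N t ((Submodule.orthogonalProjectionOnto (UN N)) (IN N z))‖)
        atTop (𝓝 0)) :
    -- conclusion: P^N S(t) z − S^N(t) P^N z → 0 uniformly in t on compact intervals
    ∀ z : H, ∀ T : ℝ, 0 < T → ∀ ε : ℝ, 0 < ε → ∃ N₀ : ℕ, ∀ N ≥ N₀, ∀ t ∈ Set.Icc (0:ℝ) T,
      ‖(Submodule.orthogonalProjectionOnto (UN N)) (IN N (S t z))
          - SN N t ((Submodule.orthogonalProjectionOnto (UN N)) (IN N z))‖ < ε := by
  intro z T hT ε hε
  have hP : ∀ N, ‖(Submodule.orthogonalProjectionOnto (UN N)).comp (IN N)‖ ≤ 1 := fun N =>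
    (ContinuousLinearMap.opNorm_comp_le _ _).trans <| by
      simpa using mul_le_mul (Submodule.orthogonalProjectionOnto_norm_le (UN N))
        ((IN N).opNorm_le_bound zero_le_one fun z => by simpa using hINnorm N z)
        (norm_nonneg _) zero_le_one
  have h := IsC0SemigroupOfType.tendstoUniformlyOn_of_tendsto_resolventDefect
    ⟨hS0, hSadd, hScont, hSbound⟩ (fun N => ⟨hSN0 N, hSNadd N, hSNcont N, hSNbound N⟩) hlam
    (fun N => (Submodule.orthogonalProjectionOnto (UN N)).comp (IN N)) hP hres z T
  simp only [Metric.tendstoUniformlyOn_iff, Pi.zero_apply, dist_zero_left, norm_norm] at h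
  exact eventually_atTop.1 (h ε hε)

/-- a version of the Trotter–Kato semigroup approximation theorem in which
the approximating spaces `H^N` (with closed subspaces `U^N`) are not subspaces of `H`:
convergence of the resolvents (given as Laplace transforms of the semigroups) implies
convergence of the semigroups, uniformly on compact time intervals (Theorem 5.1). -/
theorem stmt_6 {H : Type*} [NormedAddCommGroup H] [InnerProductSpace ℝ H] [CompleteSpace H]
    {HN : ℕ → Type*} [∀ N, NormedAddCommGroup (HN N)] [∀ N, InnerProductSpace ℝ (HN N)]
    [∀ N, CompleteSpace (HN N)]
    (UN : ∀ N, Submodule ℝ (HN N)) (hUNclosed : ∀ N, IsClosed (UN N : Set (HN N)))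
    [∀ N, Submodule.HasOrthogonalProjection (UN N)] [∀ N, CompleteSpace ↥(UN N)]
    (IN : ∀ N, H →L[ℝ] HN N) (hINsurj : ∀ N, Function.Surjective (IN N))
    (hINnorm : ∀ N (z : H), ‖IN N z‖ ≤ ‖z‖)
    (S : ℝ → H →L[ℝ] H) (SN : ∀ N, ℝ → (↥(UN N) →L[ℝ] ↥(UN N)))
    (M lam0 : ℝ) (hM : 1 ≤ M)
    -- semigroup properties of S
    (hS0 : S 0 = ContinuousLinearMap.id ℝ H)
    (hSadd : ∀ s t : ℝ, 0 ≤ s → 0 ≤ t → S (t + s) = (S t).comp (S s))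
    (hScont : ∀ z : H, ContinuousOn (fun t => S t z) (Set.Ici 0))
    (hSbound : ∀ t : ℝ, 0 ≤ t → ‖S t‖ ≤ M * Real.exp (lam0 * t))
    -- semigroup properties of the S^N, with bounds uniform in N
    (hSN0 : ∀ N, SN N 0 = ContinuousLinearMap.id ℝ ↥(UN N))
    (hSNadd : ∀ N, ∀ s t : ℝ, 0 ≤ s → 0 ≤ t → SN N (t + s) = (SN N t).comp (SN N s))
    (hSNcont : ∀ N, ∀ w : ↥(UN N), ContinuousOn (fun t => SN N t w) (Set.Ici 0))
    (hSNbound : ∀ N, ∀ t : ℝ, 0 ≤ t → ‖SN N t‖ ≤ M * Real.exp (lam0 * t))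
    (lam : ℝ) (hlam : lam0 < lam)
    -- resolvent convergence (5.6): P^N R_λ z − R_λ^N P^N z → 0 for every z, where
    -- P^N = p^N ∘ I^N and the resolvents are Laplace transforms of the semigroups
    (hres : ∀ z : H,
      Tendsto (fun N =>
          ‖(Submodule.orthogonalProjectionOnto (UN N))
              (IN N (∫ t in Set.Ioi (0:ℝ), Real.exp (-(lam * t)) • S t z))
            - ∫ t in Set.Ioi (0:ℝ), Real.exp (-(lam * t)) •
                SN N t ((Submodule.orthogonalProjectionOnto (UN N)) (IN N z))‖)
        atTop (𝓝 0)) :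
    -- conclusion: P^N S(t) z − S^N(t) P^N z → 0 uniformly in t on compact intervals
    ∀ z : H, ∀ T : ℝ, 0 < T → ∀ ε : ℝ, 0 < ε → ∃ N₀ : ℕ, ∀ N ≥ N₀, ∀ t ∈ Set.Icc (0:ℝ) T,
      ‖(Submodule.orthogonalProjectionOnto (UN N)) (IN N (S t z))
          - SN N t ((Submodule.orthogonalProjectionOnto (UN N)) (IN N z))‖ < ε :=
  stmt_6_general UN IN hINnorm S SN M lam0 hS0 hSadd hScont hSbound hSN0 hSNadd hSNcont hSNbound lam
    hlam hres
end

section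
/- Let H and K be Banach spaces, A ∈ L(H) and B ∈ L(K) bounded linear operators, P ∈ L(H, K) a bounded linear operator, and λ ∈ ℂ such that λI − A is invertible in L(H) and λI − B is invertible in L(K), with resolvents R_λ(A) = (λI − A)⁻¹ and R_λ(B) = (λI − B)⁻¹. Then for every t ≥ 0, R_λ(B) ∘ (P ∘ exp(tA) − exp(tB) ∘ P) ∘ R_λ(A) = ∫₀^t exp((t−s)B) ∘ (P ∘ R_λ(A) − R_λ(B) ∘ P) ∘ exp(sA) ds, where exp denotes the operator exponential and the integral is a Bochner integral in L(H, K). -/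
/-!
Differentiating `s ↦ exp((t - s)B) X exp(sA)` gives, for every operator `X`, the Duhamel formula
`X exp(tA) - exp(tB) X = ∫₀^t exp((t - s)B) (X A - B X) exp(sA) ds`.
Take `X = R_λ(B) P R_λ(A)`. The resolvent identities `R_λ(A) A = λ R_λ(A) - 1` and
`B R_λ(B) = λ R_λ(B) - 1` give `X A - B X = P R_λ(A) - R_λ(B) P`, and since a resolvent commutes
with the exponential of its operator, `X exp(tA) - exp(tB) X` is the left-hand side.
-/

open NormedSpace ContinuousLinearMap intervalIntegral

section Resolvent

variable {𝕜 E F : Type*} [NontriviallyNormedField 𝕜] [NormedAddCommGroup E] [NormedSpace 𝕜 E]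
  [NormedAddCommGroup F] [NormedSpace 𝕜 F] {c : 𝕜}

theorem comp_eq_smul_sub_id_of_sub_comp_eq_id {T R : E →L[𝕜] E}
    (h : (c • ContinuousLinearMap.id 𝕜 E - T).comp R = ContinuousLinearMap.id 𝕜 E) :
    T.comp R = c • R - ContinuousLinearMap.id 𝕜 E := by
  rw [← h, sub_comp, smul_comp, id_comp, sub_sub_cancel]

theorem comp_eq_smul_sub_id_of_comp_sub_eq_id {T R : E →L[𝕜] E}
    (h : R.comp (c • ContinuousLinearMap.id 𝕜 E - T) = ContinuousLinearMap.id 𝕜 E) :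
    R.comp T = c • R - ContinuousLinearMap.id 𝕜 E := by
  rw [← h, comp_sub, comp_smul, comp_id, sub_sub_cancel]

theorem commute_of_sub_comp_eq_id_of_comp_sub_eq_id {T R : E →L[𝕜] E}
    (h₁ : (c • ContinuousLinearMap.id 𝕜 E - T).comp R = ContinuousLinearMap.id 𝕜 E)
    (h₂ : R.comp (c • ContinuousLinearMap.id 𝕜 E - T) = ContinuousLinearMap.id 𝕜 E) :
    Commute T R :=
  (comp_eq_smul_sub_id_of_sub_comp_eq_id h₁).trans (comp_eq_smul_sub_id_of_comp_sub_eq_id h₂).symm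

theorem resolvent_comp_comp_resolvent_sylvester {A : E →L[𝕜] E} {B : F →L[𝕜] F}
    (P : E →L[𝕜] F) {RA : E →L[𝕜] E} {RB : F →L[𝕜] F}
    (hRA : RA.comp (c • ContinuousLinearMap.id 𝕜 E - A) = ContinuousLinearMap.id 𝕜 E)
    (hRB : (c • ContinuousLinearMap.id 𝕜 F - B).comp RB = ContinuousLinearMap.id 𝕜 F) :
    (RB.comp (P.comp RA)).comp A - B.comp (RB.comp (P.comp RA)) = P.comp RA - RB.comp P := by
  rw [comp_assoc, comp_assoc, comp_eq_smul_sub_id_of_comp_sub_eq_id hRA, ← comp_assoc B,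
    comp_eq_smul_sub_id_of_sub_comp_eq_id hRB]
  simp only [comp_sub, sub_comp, comp_smul, smul_comp, comp_id, id_comp]
  abel

end Resolvent

theorem HasDerivAt.comp_ofReal' {E : Type*} [NormedAddCommGroup E] [NormedSpace ℂ E]
    {f : ℂ → E} {f' : E} {x : ℝ} (hf : HasDerivAt f f' x) :
    HasDerivAt (fun y : ℝ => f y) f' x := by
  simpa [Function.comp_def] using hf.scomp x Complex.ofRealCLM.hasDerivAt

section Duhamel

variable {H K : Type*} [NormedAddCommGroup H] [NormedSpace ℂ H] [CompleteSpace H]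
  [NormedAddCommGroup K] [NormedSpace ℂ K] [CompleteSpace K]

theorem hasDerivAt_exp_smul_comp_comp_exp_smul (A : H →L[ℂ] H) (B : K →L[ℂ] K)
    (X : H →L[ℂ] K) (w z : ℂ) :
    HasDerivAt (fun u : ℂ => (exp ((w - u) • B)).comp (X.comp (exp (u • A))))
      ((exp ((w - z) • B)).comp ((X.comp A - B.comp X).comp (exp (z • A)))) z := by
  have hB : HasDerivAt (fun u : ℂ => exp ((w - u) • B)) (-(exp ((w - z) • B) * B)) z := by
    simpa [Function.comp_def] using
      (hasDerivAt_exp_smul_const B (w - z)).scomp z ((hasDerivAt_id z).const_sub w)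
  have hA : HasDerivAt (fun u : ℂ => X.comp (exp (u • A))) (X.comp (A * exp (z • A))) z := by
    simpa using (hasDerivAt_const z X).clm_comp (hasDerivAt_exp_smul_const' A z)
  refine (hB.clm_comp hA).congr_deriv ?_
  simp only [mul_def, sub_comp, comp_sub, comp_assoc, neg_comp]
  abel

theorem comp_exp_smul_sub_exp_smul_comp_eq_integral (A : H →L[ℂ] H) (B : K →L[ℂ] K)
    (X : H →L[ℂ] K) (t : ℝ) :
    X.comp (exp ((t : ℂ) • A)) - (exp ((t : ℂ) • B)).comp X =
      ∫ s in (0 : ℝ)..t,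
        (exp (((t - s : ℝ) : ℂ) • B)).comp ((X.comp A - B.comp X).comp (exp ((s : ℂ) • A))) := by
  have hderiv (Y : H →L[ℂ] K) (s : ℝ) : HasDerivAt
      (fun u : ℝ => (exp (((t - u : ℝ) : ℂ) • B)).comp (Y.comp (exp ((u : ℂ) • A))))
      ((exp (((t - s : ℝ) : ℂ) • B)).comp ((Y.comp A - B.comp Y).comp (exp ((s : ℂ) • A)))) s := by
    simpa using (hasDerivAt_exp_smul_comp_comp_exp_smul A B Y t s).comp_ofReal'
  rw [integral_eq_sub_of_hasDerivAt (fun s _ => hderiv X s)]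
  · simp [one_def]
  · exact (continuous_iff_continuousAt.2 fun s =>
      (hderiv (X.comp A - B.comp X) s).continuousAt).intervalIntegrable 0 t

end Duhamel

theorem stmt_7_general {H K : Type*} [NormedAddCommGroup H] [NormedSpace ℂ H] [CompleteSpace H]
    [NormedAddCommGroup K] [NormedSpace ℂ K] [CompleteSpace K]
    (A : H →L[ℂ] H) (B : K →L[ℂ] K) (P : H →L[ℂ] K) (lam : ℂ)
    (RA : H →L[ℂ] H) (RB : K →L[ℂ] K)
    (hRA₁ : (lam • ContinuousLinearMap.id ℂ H - A).comp RA = ContinuousLinearMap.id ℂ H)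
    (hRA₂ : RA.comp (lam • ContinuousLinearMap.id ℂ H - A) = ContinuousLinearMap.id ℂ H)
    (hRB₁ : (lam • ContinuousLinearMap.id ℂ K - B).comp RB = ContinuousLinearMap.id ℂ K)
    (hRB₂ : RB.comp (lam • ContinuousLinearMap.id ℂ K - B) = ContinuousLinearMap.id ℂ K)
    (t : ℝ) :
    (RB.comp ((P.comp (NormedSpace.exp ((t : ℂ) • A))
          - (NormedSpace.exp ((t : ℂ) • B)).comp P).comp RA))
      = ∫ s in (0:ℝ)..t,
          (NormedSpace.exp (((t - s : ℝ) : ℂ) • B)).comp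
            ((P.comp RA - RB.comp P).comp (NormedSpace.exp ((s : ℂ) • A))) := by
  have hRA_exp : RA.comp (exp ((t : ℂ) • A)) = (exp ((t : ℂ) • A)).comp RA :=
    (((commute_of_sub_comp_eq_id_of_comp_sub_eq_id hRA₁ hRA₂).smul_left _).exp_left).eq.symm
  have hRB_exp : (exp ((t : ℂ) • B)).comp RB = RB.comp (exp ((t : ℂ) • B)) :=
    (((commute_of_sub_comp_eq_id_of_comp_sub_eq_id hRB₁ hRB₂).smul_left _).exp_left).eq
  calc _ = (RB.comp (P.comp RA)).comp (exp ((t : ℂ) • A))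
        - (exp ((t : ℂ) • B)).comp (RB.comp (P.comp RA)) := by
        rw [comp_assoc, comp_assoc, hRA_exp, ← comp_assoc _ RB, hRB_exp]
        simp only [sub_comp, comp_sub, comp_assoc]
    _ = _ := by
        rw [comp_exp_smul_sub_exp_smul_comp_eq_integral,
          resolvent_comp_comp_resolvent_sylvester P hRA₂ hRB₁]

/-- the key integral identity (5.11) for bounded generators:
`R_λ(B) (P exp(tA) − exp(tB) P) R_λ(A) = ∫₀^t exp((t−s)B) (P R_λ(A) − R_λ(B) P) exp(sA) ds`. -/
theorem stmt_7 {H K : Type*} [NormedAddCommGroup H] [NormedSpace ℂ H] [CompleteSpace H]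
    [NormedAddCommGroup K] [NormedSpace ℂ K] [CompleteSpace K]
    (A : H →L[ℂ] H) (B : K →L[ℂ] K) (P : H →L[ℂ] K) (lam : ℂ)
    (RA : H →L[ℂ] H) (RB : K →L[ℂ] K)
    (hRA₁ : (lam • ContinuousLinearMap.id ℂ H - A).comp RA = ContinuousLinearMap.id ℂ H)
    (hRA₂ : RA.comp (lam • ContinuousLinearMap.id ℂ H - A) = ContinuousLinearMap.id ℂ H)
    (hRB₁ : (lam • ContinuousLinearMap.id ℂ K - B).comp RB = ContinuousLinearMap.id ℂ K)
    (hRB₂ : RB.comp (lam • ContinuousLinearMap.id ℂ K - B) = ContinuousLinearMap.id ℂ K)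
    (t : ℝ) (ht : 0 ≤ t) :
    (RB.comp ((P.comp (NormedSpace.exp ((t : ℂ) • A))
          - (NormedSpace.exp ((t : ℂ) • B)).comp P).comp RA))
      = ∫ s in (0:ℝ)..t,
          (NormedSpace.exp (((t - s : ℝ) : ℂ) • B)).comp
            ((P.comp RA - RB.comp P).comp (NormedSpace.exp ((s : ℂ) • A))) :=
  stmt_7_general A B P lam RA RB hRA₁ hRA₂ hRB₁ hRB₂ t
end

section
/- Let H be a Hilbert space and, for each N ∈ ℕ, let H^N be a Hilbert space and P^N : H → H^N a bounded linear map with ‖P^N‖ ≤ 1. Let n ∈ ℕ, let Â ∈ L(H) and Â^N ∈ L(H^N) satisfy ‖Âʲ‖ ≤ M̄ and ‖(Â^N)ʲ‖ ≤ M̄ for all 0 ≤ j ≤ n and all N, let B̂ ∈ L(ℝ^μ, H) and B̂^N ∈ L(ℝ^μ, H^N), and let C ∈ L(H, ℝ^ν) and C^N ∈ L(H^N, ℝ^ν) with ‖C^N‖ ≤ K for all N. Assume: (1) for every z ∈ H, max_{0 ≤ j ≤ n} ‖(Â^N)ʲ P^N z − P^N Âʲ z‖_{H^N} → 0 as N →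 ∞; (2) for every u ∈ ℝ^μ, ‖B̂^N u − P^N B̂ u‖_{H^N} → 0; (3) for every z ∈ H, |C^N P^N z − C z|_{ℝ^ν} → 0. Let u_0, ..., u_{n−1} ∈ ℝ^μ, x_0 ∈ H, and define x_{j+1} = Â x_j + B̂ u_j on H and x^N_{j+1} = Â^N x^N_j + B̂^N u_j on H^N with x^N_0 = P^N x_0. Then max_{0 ≤ j ≤ n} ‖x^N_j − P^N x_j‖_{H^N} → 0 and max_{0 ≤ j ≤ n} |C^N x^N_j − C x_j|_{ℝ^ν} → 0 as N → ∞. -/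
open Filter Topology

/-!
The error `xᴺⱼ - Pᴺ xⱼ` is propagated one step at a time: it splits as
`Âᴺ (xᴺⱼ - Pᴺ xⱼ) + (Âᴺ Pᴺ xⱼ - Pᴺ Â xⱼ) + (B̂ᴺ uⱼ - Pᴺ B̂ uⱼ)`, where the first term is
controlled by the uniform bound on `‖Âᴺ‖` and the other two by the consistency hypotheses.
The output error splits in the same way, with `Cᴺ` in place of `Âᴺ`.
-/

section

variable {ι 𝕜 : Type*} [NontriviallyNormedField 𝕜] {l : Filter ι} {E F : ι → Type*}
  [∀ i, SeminormedAddCommGroup (E i)] [∀ i, NormedSpace 𝕜 (E i)]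
  [∀ i, SeminormedAddCommGroup (F i)] [∀ i, NormedSpace 𝕜 (F i)]

theorem tendsto_norm_add_zero {a b : ∀ i, F i} (ha : Tendsto (fun i => ‖a i‖) l (𝓝 0))
    (hb : Tendsto (fun i => ‖b i‖) l (𝓝 0)) : Tendsto (fun i => ‖a i + b i‖) l (𝓝 0) :=
  squeeze_zero (fun _ => norm_nonneg _) (fun i => norm_add_le (a i) (b i)) (by
    simpa using ha.add hb)

theorem tendsto_norm_apply_sub_of_norm_le (T : ∀ i, E i →L[𝕜] F i) {M : ℝ}
    (hT : ∀ i, ‖T i‖ ≤ M) {y y' : ∀ i, E i} {w : ∀ i, F i}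
    (hy : Tendsto (fun i => ‖y i - y' i‖) l (𝓝 0))
    (hw : Tendsto (fun i => ‖T i (y' i) - w i‖) l (𝓝 0)) :
    Tendsto (fun i => ‖T i (y i) - w i‖) l (𝓝 0) := by
  have hTy : Tendsto (fun i => ‖T i (y i - y' i)‖) l (𝓝 0) :=
    squeeze_zero (fun _ => norm_nonneg _) (fun i => (T i).le_of_opNorm_le (hT i) _) (by
      simpa using hy.const_mul M)
  simpa only [map_sub, sub_add_sub_cancel] using tendsto_norm_add_zero hTy hw

end

theorem stmt_9_general {H : Type*} [NormedAddCommGroup H] [InnerProductSpace ℝ H]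
    {HN : ℕ → Type*} [∀ N, NormedAddCommGroup (HN N)] [∀ N, InnerProductSpace ℝ (HN N)]
    {μ ν : ℕ}
    (PN : ∀ N, H →L[ℝ] HN N)
    (n : ℕ) (Ahat : H →L[ℝ] H) (AhatN : ∀ N, HN N →L[ℝ] HN N)
    (Mbar : ℝ)
    (hANbound : ∀ N, ∀ j ≤ n, ‖AhatN N ^ j‖ ≤ Mbar)
    (Bhat : EuclideanSpace ℝ (Fin μ) →L[ℝ] H)
    (BhatN : ∀ N, EuclideanSpace ℝ (Fin μ) →L[ℝ] HN N)
    (C : H →L[ℝ] EuclideanSpace ℝ (Fin ν))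
    (CN : ∀ N, HN N →L[ℝ] EuclideanSpace ℝ (Fin ν))
    (K : ℝ) (hCNbound : ∀ N, ‖CN N‖ ≤ K)
    -- (1) convergence of powers
    (h1 : ∀ z : H, ∀ j ≤ n,
      Tendsto (fun N => ‖(AhatN N ^ j) (PN N z) - PN N ((Ahat ^ j) z)‖) atTop (𝓝 0))
    -- (2) convergence of input operators
    (h2 : ∀ u : EuclideanSpace ℝ (Fin μ),
      Tendsto (fun N => ‖BhatN N u - PN N (Bhat u)‖) atTop (𝓝 0))
    -- (3) convergence of output operators
    (h3 : ∀ z : H, Tendsto (fun N => ‖CN N (PN N z) - C z‖) atTop (𝓝 0))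
    -- the discrete-time systems
    (u : ℕ → EuclideanSpace ℝ (Fin μ)) (x : ℕ → H) (xN : ∀ N, ℕ → HN N)
    (hx : ∀ j, x (j + 1) = Ahat (x j) + Bhat (u j))
    (hxN0 : ∀ N, xN N 0 = PN N (x 0))
    (hxN : ∀ N j, xN N (j + 1) = AhatN N (xN N j) + BhatN N (u j)) :
    (∀ j ≤ n, Tendsto (fun N => ‖xN N j - PN N (x j)‖) atTop (𝓝 0)) ∧
      ∀ j ≤ n, Tendsto (fun N => ‖CN N (xN N j) - C (x j)‖) atTop (𝓝 0) := by
  have hstate : ∀ j ≤ n, Tendsto (fun N => ‖xN N j - PN N (x j)‖) atTop (𝓝 0) := by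
    intro j
    induction j with
    | zero => simp [hxN0]
    | succ j ih =>
      intro hj
      have hn : 1 ≤ n := by omega
      have hA : Tendsto (fun N => ‖AhatN N (xN N j) - PN N (Ahat (x j))‖) atTop (𝓝 0) :=
        tendsto_norm_apply_sub_of_norm_le AhatN (fun N => by simpa using hANbound N 1 hn)
          (ih (by omega)) (by simpa using h1 (x j) 1 hn)
      simpa only [hxN, hx, map_add, add_sub_add_comm] using tendsto_norm_add_zero hA (h2 (u j))
  exact ⟨hstate, fun j hj =>
    tendsto_norm_apply_sub_of_norm_le CN hCNbound (hstate j hj) (h3 (x j))⟩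

/-- abstract discrete-time state and output convergence (Corollary 5.1):
convergence of the powers of the sampled-time operators, of the input operators, and of
the output operators implies convergence of the states and outputs of the approximating
discrete-time systems on varying Hilbert spaces. -/
theorem stmt_9 {H : Type*} [NormedAddCommGroup H] [InnerProductSpace ℝ H] [CompleteSpace H]
    {HN : ℕ → Type*} [∀ N, NormedAddCommGroup (HN N)] [∀ N, InnerProductSpace ℝ (HN N)]
    [∀ N, CompleteSpace (HN N)] {μ ν : ℕ}
    (PN : ∀ N, H →L[ℝ] HN N) (hPN : ∀ N, ‖PN N‖ ≤ 1)
    (n : ℕ) (Ahat : H →L[ℝ] H) (AhatN : ∀ N, HN N →L[ℝ] HN N)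
    (Mbar : ℝ)
    (hAbound : ∀ j ≤ n, ‖Ahat ^ j‖ ≤ Mbar)
    (hANbound : ∀ N, ∀ j ≤ n, ‖AhatN N ^ j‖ ≤ Mbar)
    (Bhat : EuclideanSpace ℝ (Fin μ) →L[ℝ] H)
    (BhatN : ∀ N, EuclideanSpace ℝ (Fin μ) →L[ℝ] HN N)
    (C : H →L[ℝ] EuclideanSpace ℝ (Fin ν))
    (CN : ∀ N, HN N →L[ℝ] EuclideanSpace ℝ (Fin ν))
    (K : ℝ) (hCNbound : ∀ N, ‖CN N‖ ≤ K)
    -- (1) convergence of powers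
    (h1 : ∀ z : H, ∀ j ≤ n,
      Tendsto (fun N => ‖(AhatN N ^ j) (PN N z) - PN N ((Ahat ^ j) z)‖) atTop (𝓝 0))
    -- (2) convergence of input operators
    (h2 : ∀ u : EuclideanSpace ℝ (Fin μ),
      Tendsto (fun N => ‖BhatN N u - PN N (Bhat u)‖) atTop (𝓝 0))
    -- (3) convergence of output operators
    (h3 : ∀ z : H, Tendsto (fun N => ‖CN N (PN N z) - C z‖) atTop (𝓝 0))
    -- the discrete-time systems
    (u : ℕ → EuclideanSpace ℝ (Fin μ)) (x : ℕ → H) (xN : ∀ N, ℕ → HN N)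
    (hx : ∀ j, x (j + 1) = Ahat (x j) + Bhat (u j))
    (hxN0 : ∀ N, xN N 0 = PN N (x 0))
    (hxN : ∀ N j, xN N (j + 1) = AhatN N (xN N j) + BhatN N (u j)) :
    (∀ j ≤ n, Tendsto (fun N => ‖xN N j - PN N (x j)‖) atTop (𝓝 0)) ∧
      ∀ j ≤ n, Tendsto (fun N => ‖CN N (xN N j) - C (x j)‖) atTop (𝓝 0) :=
  stmt_9_general PN n Ahat AhatN Mbar hANbound Bhat BhatN C CN K hCNbound h1 h2 h3 u x xN hx hxN0
    hxN
end
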